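/- arXiv:1805.10229 — 2 statements merged into one kernel-verified Lean document; each statement's English description precedes it below -/
import Mathlib

section
/- Let $T > 0$, $D > 0$, $\gamma \in \mathbb{R}$, and let $c : [0,T] \to \mathbb{R}$ be continuous with $c(t) \ge 1$ for all $t \in [0,T]$. Set $E(t) = \exp\big(\int_0^t c(s)\,ds\big)$ and define $\check U(t,\eta) = \dfrac{(\gamma E(T) - \eta E(t))^2}{-2D E(t)^2 + (1+2D) E(T)^2}$ on $[0,T] \times \mathbb{R}$. Then: (i) the denominator satisfies $-2D E(t)^2 + (1+2D) E(T)^2 \ge E(T)^2 > 0$ for all $t \in [0,T]$; (ii) $\check U(T,\eta) = (\eta - \gamma)^2$ for all $\eta$; and (iii) for all $(t,\eta) \in (0,T) \times \mathbb{R}$: $\partial_t \check U(t,\eta) - c(t)\, \eta\, \partial_\eta \check U(t,\eta) - D\, (\partial_\eta \check U(t,\eta))^2 \ge 0$. -/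
open Set

/-!
With `q(t) = -2D E(t)² + (1+2D) E(T)²` and `E' = c E`, a direct computation gives the
HJB residual of `Ǔ` in closed form as `4 D E(t)² (γ E(T) - η E(t))² (c(t) - 1) / q(t)²`,
which is nonnegative since `c ≥ 1`. Positivity of `q` comes from `E(t) ≤ E(T)`, as `E` is
the exponential of the integral of a positive function.
-/

theorem intervalIntegral_le_of_nonneg_of_mem_Icc {c : ℝ → ℝ} {a b t : ℝ}
    (hc_cont : ContinuousOn c (Icc a b)) (hc : ∀ s ∈ Icc a b, 0 ≤ c s) (ht : t ∈ Icc a b) :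
    ∫ s in a..t, c s ≤ ∫ s in a..b, c s :=
  intervalIntegral.integral_mono_interval le_rfl ht.1 ht.2
    (MeasureTheory.ae_restrict_of_forall_mem measurableSet_Ioc
      fun s hs => hc s (Ioc_subset_Icc_self hs))
    (ContinuousOn.intervalIntegrable_of_Icc (ht.1.trans ht.2) hc_cont)

theorem hasDerivAt_intervalIntegral_of_continuousOn {c : ℝ → ℝ} {a b t : ℝ}
    (hc_cont : ContinuousOn c (Icc a b)) (ht : t ∈ Ioo a b) :
    HasDerivAt (fun u => ∫ s in a..u, c s) (c t) t :=
  intervalIntegral.integral_hasDerivAt_right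
    (ContinuousOn.intervalIntegrable_of_Icc ht.1.le (hc_cont.mono (Icc_subset_Icc le_rfl ht.2.le)))
    ((hc_cont.mono Ioo_subset_Icc_self).stronglyMeasurableAtFilter isOpen_Ioo t ht)
    (hc_cont.continuousAt (Icc_mem_nhds ht.1 ht.2))

section Residual

variable {E : ℝ → ℝ} {D a b κ t η : ℝ}

theorem hjb_residual_eq (hE : HasDerivAt E (E t * κ) t) (hq : -2 * D * E t ^ 2 + b ≠ 0) :
    deriv (fun s => (a - η * E s) ^ 2 / (-2 * D * E s ^ 2 + b)) t
        - κ * η * deriv (fun y => (a - y * E t) ^ 2 / (-2 * D * E t ^ 2 + b)) η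
        - D * (deriv (fun y => (a - y * E t) ^ 2 / (-2 * D * E t ^ 2 + b)) η) ^ 2
      = 4 * D * E t ^ 2 * (a - η * E t) ^ 2 * (κ - 1) / (-2 * D * E t ^ 2 + b) ^ 2 := by
  have h_time : HasDerivAt (fun s => (a - η * E s) ^ 2 / (-2 * D * E s ^ 2 + b))
      ((-2 * η * κ * E t * (a - η * E t) * (-2 * D * E t ^ 2 + b)
        + 4 * D * κ * E t ^ 2 * (a - η * E t) ^ 2) / (-2 * D * E t ^ 2 + b) ^ 2) t :=
    ((((hasDerivAt_const t a).fun_sub (hE.const_mul η)).fun_pow 2).fun_div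
      (((hE.fun_pow 2).const_mul (-2 * D)).add_const b) hq).congr_deriv (by ring)
  have h_space : HasDerivAt (fun y => (a - y * E t) ^ 2 / (-2 * D * E t ^ 2 + b))
      (-2 * E t * (a - η * E t) / (-2 * D * E t ^ 2 + b)) η :=
    ((((hasDerivAt_const η a).fun_sub ((hasDerivAt_id' η).mul_const (E t))).fun_pow 2).div_const
      _).congr_deriv (by ring)
  rw [h_time.deriv, h_space.deriv]
  field_simp
  ring

end Residual

theorem stmt_10_general
    (T D γ : ℝ) (hD : 0 < D)
    (c : ℝ → ℝ) (hc_cont : ContinuousOn c (Icc 0 T))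
    (hc : ∀ t ∈ Icc (0:ℝ) T, 1 ≤ c t)
    (E : ℝ → ℝ) (hE : ∀ t, E t = Real.exp (∫ s in (0:ℝ)..t, c s))
    (U : ℝ → ℝ → ℝ)
    (hU : ∀ t η, U t η =
      (γ * E T - η * E t)^2 / (-2*D*(E t)^2 + (1 + 2*D)*(E T)^2)) :
    -- (i) positivity of the denominator
    (∀ t ∈ Icc (0:ℝ) T,
      -2*D*(E t)^2 + (1 + 2*D)*(E T)^2 ≥ (E T)^2 ∧ 0 < (E T)^2)
    -- (ii) terminal condition
    ∧ (∀ η : ℝ, U T η = (η - γ)^2)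
    -- (iii) the HJB (subsolution) inequality on (0,T) × ℝ
    ∧ (∀ t ∈ Ioo (0:ℝ) T, ∀ η : ℝ,
        deriv (fun t' => U t' η) t - c t * η * deriv (fun η' => U t η') η
          - D * (deriv (fun η' => U t η') η)^2 ≥ 0) := by
  have hE_pos (t : ℝ) : 0 < E t := hE t ▸ Real.exp_pos _
  have hE_le {t : ℝ} (ht : t ∈ Icc 0 T) : E t ≤ E T := by
    rw [hE, hE, Real.exp_le_exp]
    exact intervalIntegral_le_of_nonneg_of_mem_Icc hc_cont
      (fun s hs => zero_le_one.trans (hc s hs)) ht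
  have hden {t : ℝ} (ht : t ∈ Icc 0 T) : (E T)^2 ≤ -2*D*(E t)^2 + (1 + 2*D)*(E T)^2 := by
    nlinarith [pow_le_pow_left₀ (hE_pos t).le (hE_le ht) 2]
  refine ⟨fun t ht => ⟨hden ht, pow_pos (hE_pos T) 2⟩, fun η => ?_, fun t ht η => ?_⟩
  · rw [hU, show -2*D*(E T)^2 + (1 + 2*D)*(E T)^2 = (E T)^2 by ring,
      div_eq_iff (pow_pos (hE_pos T) 2).ne']
    ring
  · have hE_deriv : HasDerivAt E (E t * c t) t := by
      rw [funext hE]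
      exact (hasDerivAt_intervalIntegral_of_continuousOn hc_cont ht).exp
    have hq := (pow_pos (hE_pos T) 2).trans_le (hden (Ioo_subset_Icc_self ht))
    simp only [hU]
    rw [hjb_residual_eq hE_deriv hq.ne']
    exact div_nonneg (mul_nonneg (by positivity) (sub_nonneg.2 (hc t (Ioo_subset_Icc_self ht))))
      (sq_nonneg _)

/-- The explicit function
`Ǔ(t,η) = (γE(T) - ηE(t))² / (-2DE(t)² + (1+2D)E(T)²)`, with
`E(t) = exp(∫₀ᵗ c)` and `c ≥ 1` continuous, is a classical subsolution of the
moderate-deviations HJB equation `∂ₜG - c(t)η∂_ηG - D(∂_ηG)² = 0` with terminal condition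
`(η - γ)²`. -/
theorem stmt_10
    (T D γ : ℝ) (hT : 0 < T) (hD : 0 < D)
    (c : ℝ → ℝ) (hc_cont : ContinuousOn c (Icc 0 T))
    (hc : ∀ t ∈ Icc (0:ℝ) T, 1 ≤ c t)
    (E : ℝ → ℝ) (hE : ∀ t, E t = Real.exp (∫ s in (0:ℝ)..t, c s))
    (U : ℝ → ℝ → ℝ)
    (hU : ∀ t η, U t η =
      (γ * E T - η * E t)^2 / (-2*D*(E t)^2 + (1 + 2*D)*(E T)^2)) :
    -- (i) positivity of the denominator
    (∀ t ∈ Icc (0:ℝ) T,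
      -2*D*(E t)^2 + (1 + 2*D)*(E T)^2 ≥ (E T)^2 ∧ 0 < (E T)^2)
    -- (ii) terminal condition
    ∧ (∀ η : ℝ, U T η = (η - γ)^2)
    -- (iii) the HJB (subsolution) inequality on (0,T) × ℝ
    ∧ (∀ t ∈ Ioo (0:ℝ) T, ∀ η : ℝ,
        deriv (fun t' => U t' η) t - c t * η * deriv (fun η' => U t η') η
          - D * (deriv (fun η' => U t η') η)^2 ≥ 0) :=
  stmt_10_general T D γ hD c hc_cont hc E hE U hU
end

section
/- Let $T > 0$, $\kappa > 0$, $D > 0$, and $\gamma \in \mathbb{R}$. Define $G(t,x) = \dfrac{(\gamma e^{\kappa T} - x e^{\kappa t})^2}{-2D e^{2\kappa t} + (1+2D) e^{2\kappa T}}$ on $[0,T] \times \mathbb{R}$. Then the denominator satisfies $-2D e^{2\kappa t} + (1+2D) e^{2\kappa T} \ge e^{2\kappa T} > 0$ for all $t \in [0,T]$, $G(T,x) = (x - \gamma)^2$ for all $x$, and $G$ satisfies exactly $\partial_t G(t,x) - \kappa x\, \partial_x G(t,x) - \kappa D\, (\partial_x G(t,x))^2 = 0$ for all $(t,x) \in (0,T)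 \times \mathbb{R}$. -/
/-!
With `w = exp (κ t)`, `q = a - x w` and `N = c - 2 D w²`, the function `q² / N` has
`∂ₓ = -2 w q / N`, and the drift term `-κ x ∂ₓ` cancels the `t`-derivative of the numerator
exactly, because `∂ₜ q = -κ x w`. What remains of `∂ₜ - κ x ∂ₓ` is the contribution of the
denominator, `4 κ D w² q² / N² = κ D (∂ₓ)²`. The paper's `G` is this function with
`a = γ exp (κ T)` and `c = (1 + 2D) exp (2 κ T)`, chosen so that `N = exp (2 κ T)` at `t = T`.
-/

open Set Real

theorem exp_two_mul_mul (κ t : ℝ) : exp (2 * κ * t) = exp (κ * t) ^ 2 := by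
  rw [← exp_nat_mul]; ring_nf

section QuadraticSolution

variable (κ D a c : ℝ)

noncomputable def quadraticSolution (t x : ℝ) : ℝ :=
  (a - x * exp (κ * t)) ^ 2 / (c - 2 * D * exp (κ * t) ^ 2)

variable {κ D a c}

theorem hasDerivAt_quadraticSolution_time {t : ℝ} (x : ℝ)
    (hN : c - 2 * D * exp (κ * t) ^ 2 ≠ 0) :
    HasDerivAt (quadraticSolution κ D a c · x)
      (-2 * κ * x * exp (κ * t) * (a - x * exp (κ * t)) / (c - 2 * D * exp (κ * t) ^ 2)
        + 4 * κ * D * exp (κ * t) ^ 2 * (a - x * exp (κ * t)) ^ 2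
          / (c - 2 * D * exp (κ * t) ^ 2) ^ 2) t := by
  have hw : HasDerivAt (fun s => exp (κ * s)) (exp (κ * t) * κ) t :=
    ((hasDerivAt_id t).const_mul κ).exp.congr_deriv (by simp)
  have hq := ((hw.const_mul x).const_sub a).fun_pow 2
  have hN' := (hw.fun_pow 2).const_mul (2 * D) |>.const_sub c
  refine (hq.div hN' hN).congr_deriv ?_
  field_simp
  ring

theorem hasDerivAt_quadraticSolution_space (t x : ℝ) :
    HasDerivAt (quadraticSolution κ D a c t)
      (-2 * exp (κ * t) * (a - x * exp (κ * t)) / (c - 2 * D * exp (κ * t) ^ 2)) x := by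
  have hq := (((hasDerivAt_id x).mul_const (exp (κ * t))).const_sub a).fun_pow 2
  refine (hq.div_const _).congr_deriv ?_
  simp only [id, Nat.cast_ofNat, one_mul]
  ring

theorem quadraticSolution_hjb {t : ℝ} (x : ℝ) (hN : c - 2 * D * exp (κ * t) ^ 2 ≠ 0) :
    deriv (quadraticSolution κ D a c · x) t
      - κ * x * deriv (quadraticSolution κ D a c t) x
      - κ * D * deriv (quadraticSolution κ D a c t) x ^ 2 = 0 := by
  rw [(hasDerivAt_quadraticSolution_time x hN).deriv,
    (hasDerivAt_quadraticSolution_space t x).deriv, div_pow]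
  ring

end QuadraticSolution

theorem exp_le_denominator {κ D t T : ℝ} (hκ : 0 ≤ κ) (hD : 0 ≤ D) (ht : t ≤ T) :
    exp (2 * κ * T) ≤ -2 * D * exp (2 * κ * t) + (1 + 2 * D) * exp (2 * κ * T) := by
  have hexp : exp (2 * κ * t) ≤ exp (2 * κ * T) := by gcongr
  linarith [mul_le_mul_of_nonneg_left hexp hD]

theorem stmt_12_general
    (T κ D γ : ℝ) (hκ : 0 < κ) (hD : 0 < D)
    (G : ℝ → ℝ → ℝ)
    (hG : ∀ t x, G t x =
      (γ * Real.exp (κ*T) - x * Real.exp (κ*t))^2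
        / (-2*D * Real.exp (2*κ*t) + (1 + 2*D) * Real.exp (2*κ*T))) :
    -- positivity of the denominator
    (∀ t ∈ Icc (0:ℝ) T,
      -2*D * Real.exp (2*κ*t) + (1 + 2*D) * Real.exp (2*κ*T) ≥ Real.exp (2*κ*T)
        ∧ 0 < Real.exp (2*κ*T))
    -- terminal condition
    ∧ (∀ x : ℝ, G T x = (x - γ)^2)
    -- the HJB equation holds exactly on (0,T) × ℝ
    ∧ (∀ t ∈ Ioo (0:ℝ) T, ∀ x : ℝ,
        deriv (fun t' => G t' x) t - κ * x * deriv (fun x' => G t x') x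
          - κ * D * (deriv (fun x' => G t x') x)^2 = 0) := by
  have hden (t : ℝ) (ht : t ≤ T) := exp_le_denominator hκ.le hD.le ht
  have hGq : G = quadraticSolution κ D (γ * exp (κ * T)) ((1 + 2 * D) * exp (2 * κ * T)) := by
    ext t x
    rw [hG, quadraticSolution, exp_two_mul_mul κ t]
    ring_nf
  refine ⟨fun t ht => ⟨hden t ht.2, exp_pos _⟩, fun x => ?_, fun t ht x => ?_⟩
  · rw [hG, exp_two_mul_mul, show ∀ v : ℝ, -2 * D * v ^ 2 + (1 + 2 * D) * v ^ 2 = v ^ 2 by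
      intro v; ring, div_eq_iff (by positivity)]
    ring
  · have hpos := (exp_pos (2 * κ * T)).trans_le (hden t ht.2.le)
    rw [hGq]
    refine quadraticSolution_hjb x (ne_of_gt ?_)
    rw [← exp_two_mul_mul]
    linarith

/-- The explicit function
`G(t,x) = (γe^{κT} - xe^{κt})² / (-2De^{2κt} + (1+2D)e^{2κT})` is an exact solution of the
homogenized HJB equation `∂ₜG - κx∂ₓG - κD(∂ₓG)² = 0` with terminal condition
`G(T,x) = (x - γ)²`. -/
theorem stmt_12
    (T κ D γ : ℝ) (hT : 0 < T) (hκ : 0 < κ) (hD : 0 < D)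
    (G : ℝ → ℝ → ℝ)
    (hG : ∀ t x, G t x =
      (γ * Real.exp (κ*T) - x * Real.exp (κ*t))^2
        / (-2*D * Real.exp (2*κ*t) + (1 + 2*D) * Real.exp (2*κ*T))) :
    -- positivity of the denominator
    (∀ t ∈ Icc (0:ℝ) T,
      -2*D * Real.exp (2*κ*t) + (1 + 2*D) * Real.exp (2*κ*T) ≥ Real.exp (2*κ*T)
        ∧ 0 < Real.exp (2*κ*T))
    -- terminal condition
    ∧ (∀ x : ℝ, G T x = (x - γ)^2)
    -- the HJB equation holds exactly on (0,T) × ℝ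
    ∧ (∀ t ∈ Ioo (0:ℝ) T, ∀ x : ℝ,
        deriv (fun t' => G t' x) t - κ * x * deriv (fun x' => G t x') x
          - κ * D * (deriv (fun x' => G t x') x)^2 = 0) :=
  stmt_12_general T κ D γ hκ hD G hG
end
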